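/- The Hall density is a probability density: ∫_0^∞ Ψ_H(r) dr = 1. -/

import Mathlib

noncomputable section
open MeasureTheory Filter Topology

/-- The Hall density `Ψ_H` for the gap distribution of the Farey sequence. -/
def PsiH (r : ℝ) : ℝ :=
  if r < 1 then 3 / Real.pi ^ 2
  else if r ≤ 4 then (3 / Real.pi ^ 2) * (-1 + 2 / r + (2 / r) * Real.log r)
  else (3 / Real.pi ^ 2) *
    (-1 + 2 / r + 2 * Real.sqrt (1 / 4 - 1 / r)
      - (4 / r) * Real.log (1 / 2 + Real.sqrt (1 / 4 - 1 / r)))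

namespace HallAux

/-- Dilogarithm-like function. -/
def Li (x : ℝ) : ℝ := ∫ s in (0:ℝ)..x, -Real.log (1-s)/s

lemma neg_log_one_sub_le {s : ℝ} (h0 : 0 ≤ s) (h1 : s < 1) :
    -Real.log (1-s) ≤ s/(1-s) := by
  have h2 : (0:ℝ) < 1 - s := by linarith
  have := Real.log_le_sub_one_of_pos (x := (1-s)⁻¹) (by positivity)
  rw [Real.log_inv] at this
  have : -Real.log (1-s) ≤ (1-s)⁻¹ - 1 := this
  calc -Real.log (1-s) ≤ (1-s)⁻¹ - 1 := this
    _ = s/(1-s) := by field_simp; ring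

lemma li_integrand_meas : Measurable (fun s : ℝ => -Real.log (1-s)/s) := by
  exact ((Real.measurable_log.comp (measurable_const.sub measurable_id)).neg).div measurable_id

lemma li_integrand_bound {x s : ℝ} (hx : x < 1) (hs : s ∈ Set.Ioc 0 x) :
    ‖-Real.log (1-s)/s‖ ≤ 1/(1-x) := by
  obtain ⟨hs0, hsx⟩ := hs
  have hs1 : s < 1 := lt_of_le_of_lt hsx hx
  have h1s : (0:ℝ) < 1 - s := by linarith
  have h1x : (0:ℝ) < 1 - x := by linarith
  have hnn : 0 ≤ -Real.log (1-s)/s := by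
    apply div_nonneg _ hs0.le
    simp only [neg_nonneg]
    exact Real.log_nonpos (by linarith) (by linarith)
  rw [Real.norm_of_nonneg hnn]
  have h2 : -Real.log (1-s) ≤ s/(1-s) := neg_log_one_sub_le hs0.le hs1
  calc -Real.log (1-s)/s ≤ (s/(1-s))/s := by
        apply div_le_div_of_nonneg_right ?_ hs0.le
        · exact h2
    _ = 1/(1-s) := by rw [div_div, mul_comm, ← div_div]; field_simp [hs0.ne']
    _ ≤ 1/(1-x) := by
        apply one_div_le_one_div_of_le h1x; linarith

lemma li_integrable {x : ℝ} (h0 : 0 ≤ x) (h1 : x < 1) :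
    IntervalIntegrable (fun s => -Real.log (1-s)/s) MeasureTheory.volume 0 x := by
  rw [intervalIntegrable_iff, Set.uIoc_of_le h0]
  apply Measure.integrableOn_of_bounded (measure_Ioc_lt_top).ne
    li_integrand_meas.aestronglyMeasurable
  filter_upwards [ae_restrict_mem measurableSet_Ioc] with s hs
  exact li_integrand_bound h1 hs

lemma li_hasDerivAt {x : ℝ} (hx : x ∈ Set.Ioo (0:ℝ) 1) :
    HasDerivAt Li (-Real.log (1-x)/x) x := by
  obtain ⟨hx0, hx1⟩ := hx
  apply intervalIntegral.integral_hasDerivAt_right (li_integrable hx0.le hx1)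
    (li_integrand_meas.stronglyMeasurable.stronglyMeasurableAtFilter)
  have h1x : (1:ℝ) - x ≠ 0 := by intro h; rw [sub_eq_zero] at h; exact hx1.ne h.symm
  exact ((Real.continuousAt_log h1x).comp (by fun_prop)).neg.div continuousAt_id hx0.ne'

lemma li_abs_le {x : ℝ} (hx : x ∈ Set.Icc (0:ℝ) (1/2)) : ‖Li x‖ ≤ 2*x := by
  obtain ⟨hx0, hx1⟩ := hx
  have := intervalIntegral.norm_integral_le_of_norm_le_const
    (f := fun s => -Real.log (1-s)/s) (a := 0) (b := x) (C := 2) ?_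
  · calc ‖Li x‖ ≤ 2 * |x - 0| := this
      _ = 2*x := by rw [sub_zero, abs_of_nonneg hx0]
  · intro s hs
    rw [Set.uIoc_of_le hx0] at hs
    calc ‖-Real.log (1-s)/s‖ ≤ 1/(1-(1/2)) := li_integrand_bound (by norm_num) (Set.Ioc_subset_Ioc_right hx1 hs)
      _ = 2 := by norm_num


lemma pow_int_on (n : ℕ) : ∫ x in Set.Ioo (0:ℝ) 1, x^n = 1/((n:ℝ)+1) := by
  rw [← MeasureTheory.integral_Ioc_eq_integral_Ioo,
    ← intervalIntegral.integral_of_le (zero_le_one)]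
  rw [integral_pow]
  push_cast
  norm_num

lemma summable_inv_sq : Summable (fun n : ℕ => 1/((n:ℝ)+1)^2) := by
  have h := (summable_nat_add_iff 1).2 hasSum_zeta_two.summable
  refine h.congr fun n => ?_
  push_cast
  ring

lemma tsum_inv_sq : ∑' n:ℕ, 1/((n:ℝ)+1)^2 = Real.pi^2/6 := by
  have h2 : HasSum (fun n : ℕ => (1:ℝ)/((n+1:ℕ):ℝ)^2) (Real.pi^2/6) := by
    rw [hasSum_nat_add_iff (f := fun n : ℕ => (1:ℝ)/(n:ℝ)^2) 1]
    simpa using hasSum_zeta_two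
  rw [← h2.tsum_eq]
  congr 1
  funext n
  push_cast
  ring

lemma int_pow_div (n : ℕ) :
    ∫ x in Set.Ioo (0:ℝ) 1, x^n/((n:ℝ)+1) = 1/((n:ℝ)+1)^2 := by
  rw [MeasureTheory.integral_div, pow_int_on]
  have : ((n:ℝ)+1) ≠ 0 := by positivity
  field_simp

lemma intOn_pow_div (n : ℕ) :
    IntegrableOn (fun x : ℝ => x^n/((n:ℝ)+1)) (Set.Ioo (0:ℝ) 1) := by
  apply (((continuous_pow n).div_const _).integrableOn_Icc (a := 0) (b := 1)).mono_set
  exact Set.Ioo_subset_Icc_self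

lemma J_val : ∫ x in Set.Ioo (0:ℝ) 1, -Real.log (1-x)/x = Real.pi^2/6 := by
  have hcongr : Set.EqOn (fun x : ℝ => -Real.log (1-x)/x)
      (fun x : ℝ => ∑' n:ℕ, x^n/((n:ℝ)+1)) (Set.Ioo (0:ℝ) 1) := by
    intro x hx
    obtain ⟨hx0, hx1⟩ := hx
    have h := Real.hasSum_pow_div_log_of_abs_lt_one (x := x)
      (by rw [abs_of_nonneg hx0.le]; exact hx1)
    have h2 := h.div_const x
    have h3 : (fun n : ℕ => x^(n+1)/((n:ℕ)+1 : ℝ)/x) = fun n : ℕ => x^n/((n:ℝ)+1) := by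
      funext n
      rw [pow_succ]
      field_simp
    rw [h3] at h2
    exact h2.tsum_eq.symm
  rw [MeasureTheory.setIntegral_congr_fun measurableSet_Ioo hcongr]
  rw [← MeasureTheory.integral_tsum_of_summable_integral_norm
    (fun n => intOn_pow_div n) ?_]
  · rw [show (fun n : ℕ => ∫ x in Set.Ioo (0:ℝ) 1, x^n/((n:ℝ)+1))
        = fun n : ℕ => 1/((n:ℝ)+1)^2 from funext int_pow_div, tsum_inv_sq]
  · apply summable_inv_sq.congr
    intro n
    rw [← int_pow_div n]
    apply MeasureTheory.setIntegral_congr_fun measurableSet_Ioo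
    intro x hx
    exact (Real.norm_of_nonneg (div_nonneg (pow_nonneg hx.1.le n) (by positivity))).symm

lemma int_neg_log_Ioc : IntegrableOn (fun x : ℝ => -Real.log x) (Set.Ioc (0:ℝ) (1/2)) := by
  apply intervalIntegral.integrableOn_deriv_of_nonneg
    (g := fun x => x - x*Real.log x)
  · exact (continuous_id.sub Real.continuous_mul_log).continuousOn
  · intro x hx
    have h1 := (hasDerivAt_id x).mul (Real.hasDerivAt_log hx.1.ne')
    refine ((hasDerivAt_id x).sub h1).congr_deriv (Eq.symm ?_)
    field_simp [hx.1.ne']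
    simp only [id_eq]; ring
  · intro x hx
    simp only [neg_nonneg]
    exact Real.log_nonpos hx.1.le (by linarith [hx.2])

lemma int_neg_log_one_sub : IntegrableOn (fun x : ℝ => -Real.log (1-x)) (Set.Ioc (1/2:ℝ) 1) := by
  apply intervalIntegral.integrableOn_deriv_of_nonneg
    (g := fun x => (1-x)*Real.log (1-x) + x)
  · exact ((Real.continuous_mul_log.comp (continuous_const.sub continuous_id)).add
      continuous_id).continuousOn
  · intro x hx
    have h1x : (1:ℝ) - x ≠ 0 := by have := hx.2; intro h; rw [sub_eq_zero] at h; linarith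
    have h := (((hasDerivAt_id (1-x)).mul (Real.hasDerivAt_log h1x)).comp x
      ((hasDerivAt_const x 1).sub (hasDerivAt_id x)))
    refine (h.add (hasDerivAt_id x)).congr_deriv (Eq.symm ?_)
    field_simp
    simp only [id_eq]; ring
  · intro x hx
    simp only [neg_nonneg]
    exact Real.log_nonpos (by linarith [hx.2]) (by linarith [hx.1])

lemma int_h_Ioc : IntegrableOn (fun x : ℝ => -Real.log (1-x)/x) (Set.Ioc (0:ℝ) (1/2)) := by
  have hb : ∀ᵐ x ∂(volume.restrict (Set.Ioc (0:ℝ) (1/2))), ‖-Real.log (1-x)/x‖ ≤ 2 := by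
    filter_upwards [ae_restrict_mem measurableSet_Ioc] with s hs
    calc ‖-Real.log (1-s)/s‖ ≤ 1/(1-(1/2)) := li_integrand_bound (by norm_num) hs
      _ = 2 := by norm_num
  exact Measure.integrableOn_of_bounded (measure_Ioc_lt_top).ne
    li_integrand_meas.aestronglyMeasurable hb

lemma int_h_Ioo_right : IntegrableOn (fun x : ℝ => -Real.log (1-x)/x) (Set.Ioo (1/2:ℝ) 1) := by
  have h := Integrable.bdd_mul (c := 2)
    (f := fun x : ℝ => x⁻¹) (g := fun x : ℝ => -Real.log (1-x))
    (int_neg_log_one_sub.mono_set Set.Ioo_subset_Ioc_self)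
    (measurable_inv.aestronglyMeasurable) ?_
  · apply h.congr
    filter_upwards with x
    rw [div_eq_inv_mul]
  · filter_upwards [ae_restrict_mem measurableSet_Ioo] with x hx
    rw [norm_inv, Real.norm_of_nonneg (by linarith [hx.1] : (0:ℝ) ≤ x)]
    rw [inv_le_comm₀ (by linarith [hx.1]) (by norm_num)]
    linarith [hx.1]

lemma int_B : IntegrableOn (fun x : ℝ => -Real.log x/(1-x)) (Set.Ioc (0:ℝ) (1/2)) := by
  have h := Integrable.bdd_mul (c := 2)
    (f := fun x : ℝ => (1-x)⁻¹) (g := fun x : ℝ => -Real.log x)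
    int_neg_log_Ioc ((measurable_const.sub measurable_id).inv.aestronglyMeasurable) ?_
  · apply h.congr
    filter_upwards with x
    rw [div_eq_inv_mul]
  · filter_upwards [ae_restrict_mem measurableSet_Ioc] with x hx
    rw [norm_inv, Real.norm_of_nonneg (by linarith [hx.2] : (0:ℝ) ≤ 1-x)]
    rw [inv_le_comm₀ (by linarith [hx.2]) (by norm_num)]
    linarith [hx.2]

lemma J_split : ∫ x in Set.Ioo (0:ℝ) 1, -Real.log (1-x)/x
    = (∫ x in Set.Ioc (0:ℝ) (1/2), -Real.log (1-x)/x)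
      + ∫ x in Set.Ioo (1/2:ℝ) 1, -Real.log (1-x)/x := by
  have hset : Set.Ioc (0:ℝ) (1/2) ∪ Set.Ioo (1/2:ℝ) 1 = Set.Ioo (0:ℝ) 1 := by
    ext y
    simp only [Set.mem_union, Set.mem_Ioc, Set.mem_Ioo]
    constructor
    · rintro (⟨h1,h2⟩|⟨h1,h2⟩) <;> constructor <;> linarith
    · rintro ⟨h1,h2⟩
      rcases le_or_gt y (1/2) with h|h
      exacts [Or.inl ⟨h1,h⟩, Or.inr ⟨h,h2⟩]
  rw [← hset, MeasureTheory.setIntegral_union ?_ measurableSet_Ioo int_h_Ioc int_h_Ioo_right]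
  exact Set.disjoint_left.2 (fun y hy hy2 => absurd hy2.1 (not_lt.2 hy.2))

lemma reflect : ∫ x in Set.Ioo (1/2:ℝ) 1, -Real.log (1-x)/x
    = ∫ x in Set.Ioc (0:ℝ) (1/2), -Real.log x/(1-x) := by
  rw [← MeasureTheory.integral_Ioc_eq_integral_Ioo,
    ← intervalIntegral.integral_of_le (by norm_num : (1/2:ℝ) ≤ 1),
    ← intervalIntegral.integral_of_le (by norm_num : (0:ℝ) ≤ 1/2)]
  have h := intervalIntegral.integral_comp_sub_left (a := (1/2:ℝ)) (b := 1)
    (fun u : ℝ => -Real.log u/(1-u)) 1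
  simp only [sub_sub_cancel] at h
  norm_num at h
  convert h using 2

lemma phi_cont : ContinuousOn (fun x : ℝ => Real.log x * Real.log (1-x))
    (Set.Icc (0:ℝ) (1/2)) := by
  intro x hx
  rcases eq_or_lt_of_le hx.1 with h0|h0
  · -- x = 0
    subst h0
    unfold ContinuousWithinAt
    rw [show ((fun x : ℝ => Real.log x * Real.log (1-x)) 0) = 0 by simp]
    apply squeeze_zero_norm'
    · filter_upwards [self_mem_nhdsWithin] with y hy
      show ‖Real.log y * Real.log (1-y)‖ ≤ 2*‖y * Real.log y‖
      rcases eq_or_lt_of_le hy.1 with h0'|h0'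
      · rw [← h0']; simp
      · have hy2 : y ≤ 1/2 := hy.2
        have h1y : (0:ℝ) < 1 - y := by linarith
        have hlog : ‖Real.log (1-y)‖ ≤ 2*y := by
          rw [Real.norm_of_nonpos (Real.log_nonpos h1y.le (by linarith))]
          calc -Real.log (1-y) ≤ y/(1-y) := neg_log_one_sub_le h0'.le (by linarith)
            _ ≤ y/(1/2) := by
                apply div_le_div_of_nonneg_left h0'.le (by norm_num) (by linarith)
            _ = 2*y := by ring
        calc ‖Real.log y * Real.log (1-y)‖ = ‖Real.log y‖ * ‖Real.log (1-y)‖ := norm_mul _ _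
          _ ≤ ‖Real.log y‖ * (2*y) := by
              apply mul_le_mul_of_nonneg_left hlog (norm_nonneg _)
          _ = 2*‖y * Real.log y‖ := by
              rw [norm_mul, Real.norm_of_nonneg h0'.le]; ring
    · have hc : Continuous (fun y : ℝ => 2*‖y * Real.log y‖) :=
        continuous_const.mul Real.continuous_mul_log.norm
      have := (hc.tendsto 0).mono_left (nhdsWithin_le_nhds (s := Set.Icc (0:ℝ) (1/2)))
      simpa using this
  · -- 0 < x
    apply ContinuousAt.continuousWithinAt
    have h1x : (1:ℝ) - x ≠ 0 := by have := hx.2; intro h; rw [sub_eq_zero] at h; linarith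
    exact (Real.continuousAt_log h0.ne').mul
      ((Real.continuousAt_log h1x).comp (by fun_prop))

lemma ftc_phi : ∫ x in (0:ℝ)..(1/2), (-Real.log x/(1-x) - (-Real.log (1-x)/x))
    = (Real.log 2)^2 := by
  have h := intervalIntegral.integral_eq_sub_of_hasDeriv_right_of_le
    (f := fun x : ℝ => Real.log x * Real.log (1-x))
    (f' := fun x : ℝ => -Real.log x/(1-x) - (-Real.log (1-x)/x))
    (a := 0) (b := 1/2) (by norm_num) phi_cont ?_ ?_
  · rw [h]
    show Real.log (1/2) * Real.log (1-1/2) - Real.log 0 * Real.log (1-0) = Real.log 2^2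
    rw [Real.log_zero, show (1:ℝ)-1/2 = 1/2 by norm_num, one_div, Real.log_inv]
    ring
  · intro x hx
    obtain ⟨hx0, hx2⟩ := hx
    have h1x : (1:ℝ) - x ≠ 0 := by intro h; rw [sub_eq_zero] at h; linarith
    have hd2 : HasDerivAt (fun x : ℝ => Real.log (1-x)) (-(1-x)⁻¹) x := by
      have := (Real.hasDerivAt_log h1x).comp x
        ((hasDerivAt_const x 1).sub (hasDerivAt_id x))
      refine this.congr_deriv (Eq.symm ?_)
      ring
    have := (Real.hasDerivAt_log hx0.ne').mul hd2
    apply HasDerivAt.hasDerivWithinAt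
    refine this.congr_deriv (Eq.symm ?_)
    field_simp
    ring
  · rw [intervalIntegrable_iff, Set.uIoc_of_le (by norm_num : (0:ℝ) ≤ 1/2)]
    exact int_B.sub int_h_Ioc

lemma Li_half : Li (1/2) = Real.pi^2/12 - (Real.log 2)^2/2 := by
  have hA : Li (1/2) = ∫ x in Set.Ioc (0:ℝ) (1/2), -Real.log (1-x)/x :=
    intervalIntegral.integral_of_le (by norm_num)
  have hBint : IntervalIntegrable (fun x : ℝ => -Real.log x/(1-x)) volume 0 (1/2) := by
    rw [intervalIntegrable_iff, Set.uIoc_of_le (by norm_num : (0:ℝ) ≤ 1/2)]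
    exact int_B
  have hAint : IntervalIntegrable (fun x : ℝ => -Real.log (1-x)/x) volume 0 (1/2) :=
    li_integrable (by norm_num) (by norm_num)
  have hsub := intervalIntegral.integral_sub hBint hAint
  rw [ftc_phi] at hsub
  have hB : ∫ x in (0:ℝ)..(1/2), -Real.log x/(1-x)
      = ∫ x in Set.Ioc (0:ℝ) (1/2), -Real.log x/(1-x) :=
    intervalIntegral.integral_of_le (by norm_num)
  have hsum : Li (1/2) + (∫ x in Set.Ioc (0:ℝ) (1/2), -Real.log x/(1-x)) = Real.pi^2/6 := by
    rw [hA, ← reflect, ← J_split, J_val]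
  rw [hB, show (∫ x in (0:ℝ)..(1/2), -Real.log (1-x)/x) = Li (1/2) from rfl] at hsub
  linarith [hsub, hsum]

/-- Elementary part of the tail antiderivative. -/
def Gelem (t : ℝ) : ℝ :=
  -4/(1+t) - 4*Real.log (1+t) + 2*(Real.log (1+t))^2 - 4*Real.log 2*Real.log (1+t)

def G (t : ℝ) : ℝ := Gelem t - 4*Li ((1-t)/2)

def tau (r : ℝ) : ℝ := Real.sqrt (1 - 4/r)

def F3 (r : ℝ) : ℝ := G (tau r)

def g3 (r : ℝ) : ℝ :=
  -1 + 2/r + 2*Real.sqrt (1/4 - 1/r) - (4/r)*Real.log (1/2 + Real.sqrt (1/4 - 1/r))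

lemma tau_nonneg (r : ℝ) : 0 ≤ tau r := Real.sqrt_nonneg _

lemma tau_sq {r : ℝ} (hr : 4 ≤ r) : tau r^2 = 1 - 4/r := by
  have hr0 : (0:ℝ) < r := by linarith
  apply Real.sq_sqrt
  rw [sub_nonneg, div_le_one hr0]
  linarith

lemma tau_lt_one {r : ℝ} (hr : 4 < r) : tau r < 1 := by
  have hr0 : (0:ℝ) < r := by linarith
  rw [show (1:ℝ) = Real.sqrt 1 from Real.sqrt_one.symm]
  apply Real.sqrt_lt_sqrt (by rw [sub_nonneg, div_le_one hr0]; linarith)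
  have : 0 < 4/r := by positivity
  linarith

lemma tau_pos {r : ℝ} (hr : 4 < r) : 0 < tau r := by
  apply Real.sqrt_pos.2
  have hr0 : (0:ℝ) < r := by linarith
  rw [sub_pos, div_lt_one hr0]
  linarith

lemma sqrt_quarter {r : ℝ} (hr : 4 ≤ r) : Real.sqrt (1/4 - 1/r) = tau r/2 := by
  have h : 1/4 - 1/r = (tau r/2)^2 := by
    rw [div_pow, tau_sq hr]
    have hr0 : r ≠ 0 := by intro h; rw [h] at hr; norm_num at hr
    field_simp
    first
    | (left; ring)
    | ring
    | trivial
  rw [h, Real.sqrt_sq (div_nonneg (tau_nonneg r) (by norm_num))]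

lemma tau_hasDeriv {r : ℝ} (hr : 4 < r) : HasDerivAt tau (2/(r^2*tau r)) r := by
  have hr0 : (0:ℝ) < r := by linarith
  have h4r : 0 < 1 - 4/r := by rw [sub_pos, div_lt_one hr0]; linarith
  have hinner : HasDerivAt (fun r : ℝ => 1 - 4/r) (4/r^2) r := by
    have h := (hasDerivAt_const r (1:ℝ)).sub
      ((hasDerivAt_const r (4:ℝ)).div (hasDerivAt_id r) hr0.ne')
    refine h.congr_deriv (Eq.symm ?_)
    simp only [id_eq]; field_simp
    ring
  have hs := (Real.hasDerivAt_sqrt h4r.ne').comp r hinner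
  have htpos := Real.sqrt_pos.2 h4r
  refine hs.congr_deriv (Eq.symm ?_)
  rw [show tau r = Real.sqrt (1 - 4/r) from rfl]
  field_simp
  ring

lemma li_half_mem : (1:ℝ)/2 ∈ Set.Ioo (0:ℝ) 1 := by norm_num

lemma G_hasDeriv {t : ℝ} (ht0 : 0 < t) (ht1 : t < 1) :
    HasDerivAt G (4/(1+t)^2 - 4*(1/(1+t)) + 2*(2*Real.log (1+t)*(1/(1+t)))
      - 4*Real.log 2*(1/(1+t)) - 4*((-Real.log (1-(1-t)/2)/((1-t)/2)) * (-(1/2)))) t := by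
  have h1t : (0:ℝ) < 1 + t := by linarith
  have hone : HasDerivAt (fun t : ℝ => 1 + t) 1 t := by
    simpa using (hasDerivAt_id t).const_add 1
  have hinv : HasDerivAt (fun t : ℝ => -4/(1+t)) (4/(1+t)^2) t := by
    have := (hasDerivAt_const t (-4:ℝ)).div hone h1t.ne'
    refine this.congr_deriv (Eq.symm ?_)
    field_simp
    ring
  have hlog : HasDerivAt (fun t : ℝ => Real.log (1+t)) (1/(1+t)) t := by
    have := (Real.hasDerivAt_log h1t.ne').comp t hone
    refine this.congr_deriv (Eq.symm ?_)
    rw [one_div]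
    simp
  have hsq : HasDerivAt (fun t : ℝ => (Real.log (1+t))^2)
      (2*Real.log (1+t)*(1/(1+t))) t := by
    have := hlog.pow 2
    refine this.congr_deriv (Eq.symm ?_)
    push_cast
    ring
  have hu : HasDerivAt (fun t : ℝ => (1-t)/2) (-(1/2)) t := by
    have := ((hasDerivAt_const t (1:ℝ)).sub (hasDerivAt_id t)).div_const 2
    refine this.congr_deriv (Eq.symm ?_)
    norm_num
  have hmem : (1-t)/2 ∈ Set.Ioo (0:ℝ) 1 := by
    constructor <;> [linarith; linarith]
  have hLi : HasDerivAt (fun t : ℝ => Li ((1-t)/2))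
      ((-Real.log (1-(1-t)/2)/((1-t)/2)) * (-(1/2))) t :=
    by have := (li_hasDerivAt hmem).comp t hu; exact this
  exact (((hinv.sub (hlog.const_mul 4)).add (hsq.const_mul 2)).sub
    (hlog.const_mul (4*Real.log 2))).sub (hLi.const_mul 4)

lemma F3_hasDeriv {r : ℝ} (hr : 4 < r) : HasDerivAt F3 (g3 r) r := by
  have ht0 := tau_pos hr
  have ht1 := tau_lt_one hr
  have hr0 : (0:ℝ) < r := by linarith
  have hcomp := (G_hasDeriv ht0 ht1).comp r (tau_hasDeriv hr)
  show HasDerivAt (fun r => G (tau r)) (g3 r) r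
  refine hcomp.congr_deriv (Eq.symm ?_)
  unfold g3
  rw [sqrt_quarter hr.le]
  set t := tau r with htdef
  have ht2 : t^2 = 1 - 4/r := tau_sq hr.le
  have h1t : (0:ℝ) < 1+t := by linarith
  have h1t' : (0:ℝ) < 1-t := by linarith
  have hrt : r = 4/(1-t^2) := by
    have h : 1 - t^2 = 4/r := by linarith
    rw [h]
    field_simp
  rw [show (1:ℝ)/2 + t/2 = (1+t)/2 by ring,
      show (1:ℝ) - (1-t)/2 = (1+t)/2 by ring,
      Real.log_div h1t.ne' two_ne_zero, hrt]
  have hden : (1:ℝ) - t^2 ≠ 0 := by nlinarith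
  field_simp
  ring

lemma g3_nonneg {r : ℝ} (hr : 4 < r) : 0 ≤ g3 r := by
  have ht0 := tau_pos hr
  have ht1 := tau_lt_one hr
  have hr0 : (0:ℝ) < r := by linarith
  unfold g3
  rw [sqrt_quarter hr.le]
  set t := tau r with htdef
  have ht2 : t^2 = 1 - 4/r := tau_sq hr.le
  have h1t : (0:ℝ) < 1+t := by linarith
  have hlog := Real.log_le_sub_one_of_pos (x := (1+t)/2) (by positivity)
  rw [Real.log_div h1t.ne' two_ne_zero] at hlog
  rw [show (1:ℝ)/2 + t/2 = (1+t)/2 by ring, Real.log_div h1t.ne' two_ne_zero]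
  have h4r : 4/r = 1-t^2 := by linarith
  have h2r : 2/r = (1-t^2)/2 := by
    rw [← h4r]
    field_simp
    ring
  rw [h2r, h4r]
  have key : 0 ≤ (1-t^2)*((t-1)/2 - (Real.log (1+t) - Real.log 2)) := by
    apply mul_nonneg (by nlinarith)
    have : (t-1)/2 = (1+t)/2 - 1 := by ring
    linarith
  have key2 : (0:ℝ) ≤ t*(1-t)^2 := by positivity
  nlinarith [key, key2]

lemma tau_cont4 : ContinuousAt tau 4 := by
  apply Real.continuous_sqrt.continuousAt.comp
  exact continuousAt_const.sub (continuousAt_const.div continuousAt_id (by norm_num))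

lemma tau_four : tau 4 = 0 := by
  unfold tau
  norm_num

lemma Gelem_contAt {a : ℝ} (ha : 0 < 1+a) : ContinuousAt Gelem a := by
  have hl : ContinuousAt (fun t : ℝ => Real.log (1+t)) a :=
    (Real.continuousAt_log ha.ne').comp (continuousAt_const.add continuousAt_id)
  unfold Gelem
  exact (((continuousAt_const.div (continuousAt_const.add continuousAt_id) ha.ne').sub
    (continuousAt_const.mul hl)).add (continuousAt_const.mul (hl.pow 2))).sub
    (continuousAt_const.mul hl)

lemma F3_contAt4 : ContinuousWithinAt F3 (Set.Ici (4:ℝ)) 4 := by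
  apply ContinuousAt.continuousWithinAt
  have hG : ContinuousAt G (tau 4) := by
    rw [tau_four]
    unfold G
    apply ContinuousAt.sub (Gelem_contAt (by norm_num))
    apply ContinuousAt.mul continuousAt_const
    have h : ContinuousAt Li (((1:ℝ)-0)/2) := by
      rw [show ((1:ℝ)-0)/2 = 1/2 by norm_num]
      exact (li_hasDerivAt li_half_mem).continuousAt
    have h2 : ContinuousAt (fun t : ℝ => (1-t)/2) 0 := by fun_prop
    exact ContinuousAt.comp (x := 0) (f := fun t : ℝ => (1-t)/2) (g := Li) h h2
  exact hG.comp tau_cont4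

lemma tau_tendsto : Tendsto tau atTop (𝓝 1) := by
  have h1 : Tendsto (fun r:ℝ => 1 - 4/r) atTop (𝓝 1) := by
    have := (tendsto_const_nhds (x := (1:ℝ)) (f := atTop (α := ℝ))).sub
      (Tendsto.div_atTop (tendsto_const_nhds (x := (4:ℝ))) tendsto_id)
    simpa using this
  have h2 : Tendsto (fun r : ℝ => Real.sqrt (1-4/r)) atTop (𝓝 (Real.sqrt 1)) :=
    (Real.continuous_sqrt.continuousAt.tendsto).comp h1
  rw [Real.sqrt_one] at h2
  exact h2

lemma LiComp_tendsto : Tendsto (fun r => Li ((1-tau r)/2)) atTop (𝓝 0) := by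
  apply squeeze_zero_norm'
  · filter_upwards [eventually_ge_atTop (4:ℝ)] with r hrr
    have hr0 : (0:ℝ) < r := by linarith
    have htle : tau r ≤ 1 := by
      show Real.sqrt (1 - 4/r) ≤ 1
      rw [show (1:ℝ) = Real.sqrt 1 from Real.sqrt_one.symm]
      apply Real.sqrt_le_sqrt
      rw [Real.sqrt_one]
      have : 0 ≤ 4/r := by positivity
      linarith
    exact li_abs_le ⟨by linarith [htle], by linarith [tau_nonneg r]⟩
  · have h := ((tendsto_const_nhds (x := (1:ℝ)) (f := atTop (α := ℝ))).sub
      tau_tendsto).div_const 2 |>.const_mul 2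
    norm_num at h
    exact h

lemma F3_tendsto : Tendsto F3 atTop (𝓝 (-2 - 4*Real.log 2 - 2*(Real.log 2)^2)) := by
  have hGe : Tendsto (fun r => Gelem (tau r)) atTop (𝓝 (Gelem 1)) :=
    (Gelem_contAt (by norm_num : (0:ℝ) < 1+1)).tendsto.comp tau_tendsto
  have hLi := LiComp_tendsto.const_mul 4
  have h := hGe.sub hLi
  have hval : Gelem 1 - 4*0 = -2 - 4*Real.log 2 - 2*(Real.log 2)^2 := by
    unfold Gelem
    rw [show (1:ℝ)+1 = 2 by norm_num]
    ring
  rw [hval] at h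
  exact h

lemma F3_four : F3 4 = -4 - Real.pi^2/3 + 2*(Real.log 2)^2 := by
  show G (tau 4) = _
  rw [tau_four]
  unfold G Gelem
  rw [show ((1:ℝ)-0)/2 = 1/2 by norm_num, Li_half]
  simp [Real.log_one]
  ring

lemma tail_int : ∫ r in Set.Ioi (4:ℝ), g3 r
    = Real.pi^2/3 + 2 - 4*Real.log 2 - 4*(Real.log 2)^2 := by
  rw [MeasureTheory.integral_Ioi_of_hasDerivAt_of_nonneg F3_contAt4
    (fun x hx => F3_hasDeriv hx) (fun x hx => g3_nonneg hx) F3_tendsto, F3_four]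
  ring

lemma g3_intOn : IntegrableOn g3 (Set.Ioi (4:ℝ)) :=
  MeasureTheory.integrableOn_Ioi_deriv_of_nonneg F3_contAt4
    (fun x hx => F3_hasDeriv hx) (fun x hx => g3_nonneg hx) F3_tendsto

lemma measurable_PsiH : Measurable PsiH := by
  unfold PsiH
  apply Measurable.ite (measurableSet_lt measurable_id measurable_const) measurable_const
  apply Measurable.ite (measurableSet_le measurable_id measurable_const)
  · apply Measurable.const_mul
    apply Measurable.add
    · exact (measurable_const.add (measurable_const.div measurable_id))
    · exact (measurable_const.div measurable_id).mul Real.measurable_log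
  · apply Measurable.const_mul
    apply Measurable.sub
    · apply Measurable.add
      · exact measurable_const.add (measurable_const.div measurable_id)
      · exact measurable_const.mul
          (Real.continuous_sqrt.measurable.comp (measurable_const.sub (measurable_const.div measurable_id)))
    · exact (measurable_const.div measurable_id).mul
        (Real.measurable_log.comp (measurable_const.add
          (Real.continuous_sqrt.measurable.comp (measurable_const.sub (measurable_const.div measurable_id)))))

lemma PsiH_eq_tail {r : ℝ} (hr : 4 < r) : PsiH r = 3/Real.pi^2 * g3 r := by
  unfold PsiH g3
  rw [if_neg (by push_neg; linarith), if_neg (by push_neg; linarith)]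

lemma I_left : ∫ r in Set.Ioc (0:ℝ) 1, PsiH r = 3/Real.pi^2 := by
  rw [MeasureTheory.integral_Ioc_eq_integral_Ioo]
  rw [MeasureTheory.setIntegral_congr_fun measurableSet_Ioo
    (g := fun _ => 3/Real.pi^2) (fun x hx => by unfold PsiH; rw [if_pos hx.2])]
  rw [MeasureTheory.setIntegral_const]
  simp [Real.volume_Ioo]

lemma I_mid : ∫ r in Set.Ioc (1:ℝ) 4, PsiH r
    = 3/Real.pi^2 * (-3 + 4*Real.log 2 + 4*(Real.log 2)^2) := by
  have heq : Set.EqOn PsiH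
      (fun r : ℝ => (3 / Real.pi ^ 2) * (-1 + 2 / r + (2 / r) * Real.log r))
      (Set.Ioc (1:ℝ) 4) := by
    intro r hr
    unfold PsiH
    rw [if_neg (by push_neg; linarith [hr.1]), if_pos hr.2]
  rw [MeasureTheory.setIntegral_congr_fun measurableSet_Ioc heq,
    ← intervalIntegral.integral_of_le (by norm_num : (1:ℝ) ≤ 4)]
  rw [intervalIntegral.integral_eq_sub_of_hasDerivAt
    (f := fun r : ℝ => (3/Real.pi^2) * (-r + 2*Real.log r + (Real.log r)^2)) ?_ ?_]
  · have h4 : Real.log 4 = 2*Real.log 2 := by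
      rw [show (4:ℝ) = 2^2 by norm_num, Real.log_pow]
      push_cast
      ring
    rw [h4, Real.log_one]
    ring
  · intro x hx
    rw [Set.uIcc_of_le (by norm_num : (1:ℝ) ≤ 4)] at hx
    have hx0 : (0:ℝ) < x := by linarith [hx.1]
    have h := ((((hasDerivAt_id x).neg.add ((Real.hasDerivAt_log hx0.ne').const_mul 2)).add
      ((Real.hasDerivAt_log hx0.ne').pow 2)).const_mul (3/Real.pi^2))
    refine h.congr_deriv (Eq.symm ?_)
    push_cast
    field_simp
  · apply ContinuousOn.intervalIntegrable
    apply ContinuousOn.mul continuousOn_const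
    intro x hx
    rw [Set.uIcc_of_le (by norm_num : (1:ℝ) ≤ 4)] at hx
    have hx0 : x ≠ 0 := by have := hx.1; intro h; rw [h] at this; linarith
    apply ContinuousAt.continuousWithinAt
    exact (continuousAt_const.add (continuousAt_const.div continuousAt_id hx0)).add
      ((continuousAt_const.div continuousAt_id hx0).mul (Real.continuousAt_log hx0))

lemma I_right : ∫ r in Set.Ioi (4:ℝ), PsiH r
    = 3/Real.pi^2 * (Real.pi^2/3 + 2 - 4*Real.log 2 - 4*(Real.log 2)^2) := by
  rw [MeasureTheory.setIntegral_congr_fun measurableSet_Ioi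
    (g := fun r => 3/Real.pi^2 * g3 r) (fun r hr => PsiH_eq_tail hr)]
  rw [MeasureTheory.integral_const_mul, tail_int]

lemma abs_PsiH_le {r : ℝ} (hr : r ∈ Set.Ioc (0:ℝ) 4) : ‖PsiH r‖ ≤ 3 := by
  have hpi : (9:ℝ) ≤ Real.pi^2 := by nlinarith [Real.pi_gt_three]
  have hpi0 : (0:ℝ) < Real.pi^2 := by linarith
  have hc1 : 3/Real.pi^2 ≤ 1/3 := by
    rw [div_le_div_iff₀ hpi0 (by norm_num)]
    linarith
  have hc0 : (0:ℝ) < 3/Real.pi^2 := by positivity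
  unfold PsiH
  by_cases h1 : r < 1
  · rw [if_pos h1, Real.norm_of_nonneg hc0.le]
    linarith
  · rw [if_neg h1, if_pos hr.2]
    push_neg at h1
    have hr4 := hr.2
    have hr0 : (0:ℝ) < r := by linarith
    have h2r1 : 2/r ≤ 2 := by rw [div_le_iff₀ hr0]; linarith
    have h2r0 : (0:ℝ) < 2/r := by positivity
    have hlog0 : 0 ≤ Real.log r := Real.log_nonneg h1
    have hlog3 : Real.log r ≤ 3 := by
      have := Real.log_le_sub_one_of_pos hr0
      linarith
    have hmul : (2/r)*Real.log r ≤ 6 := by nlinarith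
    have hmul0 : 0 ≤ (2/r)*Real.log r := by positivity
    have hinner : ‖-1 + 2/r + (2/r)*Real.log r‖ ≤ 7 := by
      rw [Real.norm_eq_abs, abs_le]
      constructor <;> nlinarith
    calc ‖3/Real.pi^2 * (-1 + 2/r + (2/r)*Real.log r)‖
        = (3/Real.pi^2) * ‖-1 + 2/r + (2/r)*Real.log r‖ := by
          rw [norm_mul, Real.norm_of_nonneg hc0.le]
      _ ≤ (1/3) * 7 := by
          apply mul_le_mul hc1 hinner (norm_nonneg _) (by norm_num)
      _ ≤ 3 := by norm_num

lemma intOn_Ioc04 : IntegrableOn PsiH (Set.Ioc (0:ℝ) 4) := by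
  apply Measure.integrableOn_of_bounded (measure_Ioc_lt_top).ne
    measurable_PsiH.aestronglyMeasurable
  filter_upwards [ae_restrict_mem measurableSet_Ioc] with r hr
  exact abs_PsiH_le hr

lemma intOn_Ioi4 : IntegrableOn PsiH (Set.Ioi (4:ℝ)) := by
  apply IntegrableOn.congr_fun (g3_intOn.const_mul (3/Real.pi^2))
    (fun r hr => (PsiH_eq_tail hr).symm) measurableSet_Ioi

end HallAux

open HallAux in
/-- The Hall density is a probability density. -/
theorem statement16 : (∫ r in Set.Ioi (0:ℝ), PsiH r) = 1 := by
  have hunion1 : Set.Ioi (0:ℝ) = Set.Ioc 0 4 ∪ Set.Ioi 4 :=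
    (Set.Ioc_union_Ioi_eq_Ioi (by norm_num)).symm
  rw [hunion1, MeasureTheory.setIntegral_union (Set.Ioc_disjoint_Ioi le_rfl)
    measurableSet_Ioi intOn_Ioc04 intOn_Ioi4]
  have hunion2 : Set.Ioc (0:ℝ) 4 = Set.Ioc 0 1 ∪ Set.Ioc 1 4 :=
    (Set.Ioc_union_Ioc_eq_Ioc (by norm_num) (by norm_num)).symm
  rw [hunion2, MeasureTheory.setIntegral_union (Set.Ioc_disjoint_Ioc_of_le le_rfl)
    measurableSet_Ioc (intOn_Ioc04.mono_set (Set.Ioc_subset_Ioc_right (by norm_num)))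
    (intOn_Ioc04.mono_set (Set.Ioc_subset_Ioc_left (by norm_num)))]
  rw [I_left, I_mid, I_right]
  have hpi := Real.pi_ne_zero
  field_simp
  ring
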